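/- Let χ: ℝⁿ → ℝ be a kernel satisfying conditions (K1)–(K3) with respect to the node sequence Πⁿ. Then for every uniformly continuous and bounded function f: ℝⁿ → ℝ, the multivariate sampling Kantorovich operators converge uniformly: lim_{w→+∞} ‖S_w^χ f − f‖_∞ = 0. -/

import Mathlib

open MeasureTheory Filter

noncomputable section

/-- The multivariate nodes `t_k = (t_{k_1}, …, t_{k_n})` built from a one-dimensional
node sequence `t : ℤ → ℝ`. -/
def nodes {n : ℕ} (t : ℤ → ℝ) (k : Fin n → ℤ) : EuclideanSpace ℝ (Fin n) :=
  WithLp.toLp 2 (fun i => t (k i))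

/-- The plurirectangle `R_k^w = ∏_i [t_{k_i}/w, t_{k_i+1}/w]`. -/
def cell {n : ℕ} (t : ℤ → ℝ) (w : ℝ) (k : Fin n → ℤ) : Set (EuclideanSpace ℝ (Fin n)) :=
  WithLp.ofLp ⁻¹' Set.univ.pi fun i => Set.Icc (t (k i) / w) (t (k i + 1) / w)

/-- The multivariate sampling Kantorovich operator
`(S_w^χ f)(x) = ∑_k χ(wx − t_k) · (wⁿ/A_k) ∫_{R_k^w} f`. -/
def SK {n : ℕ} (t : ℤ → ℝ) (χ : EuclideanSpace ℝ (Fin n) → ℝ) (w : ℝ)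
    (f : EuclideanSpace ℝ (Fin n) → ℝ) (x : EuclideanSpace ℝ (Fin n)) : ℝ :=
  ∑' k : Fin n → ℤ,
    χ (w • x - nodes t k) *
      ((w ^ n / ∏ i, (t (k i + 1) - t (k i))) * ∫ u in cell t w k, f u)

/-- The node sequence `Π = (t_k)` is strictly increasing, diverges at `±∞`, and has gaps
between `δ` and `Δ`. -/
structure IsNodeSeq (t : ℤ → ℝ) (δ Δ : ℝ) : Prop where
  strictMono : StrictMono t
  tendsto_atTop : Tendsto t atTop atTop
  tendsto_atBot : Tendsto t atBot atBot
  delta_pos : 0 < δ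
  Delta_pos : 0 < Δ
  gap_lower : ∀ k : ℤ, δ ≤ t (k + 1) - t k
  gap_upper : ∀ k : ℤ, t (k + 1) - t k ≤ Δ

/-- The kernel conditions (K1)–(K3) for `χ : ℝⁿ → ℝ` with respect to the nodes `Πⁿ`. -/
structure IsKernel {n : ℕ} (t : ℤ → ℝ) (χ : EuclideanSpace ℝ (Fin n) → ℝ) : Prop where
  /-- (K1): `χ ∈ L¹(ℝⁿ)`. -/
  integrable : Integrable χ
  /-- (K1): `χ` is bounded in a neighbourhood of the origin. -/
  bounded_near_zero : ∃ ε > (0 : ℝ), ∃ M : ℝ,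
    ∀ x : EuclideanSpace ℝ (Fin n), ‖x‖ < ε → |χ x| ≤ M
  /-- (K2): `∑_k χ(u − t_k) = 1` for every `u`. -/
  partition_of_unity : ∀ u : EuclideanSpace ℝ (Fin n),
    ∑' k : Fin n → ℤ, χ (u - nodes t k) = 1
  /-- (K3): the absolute discrete moment of some order `β > 0` is finite. -/
  moment : ∃ β > (0 : ℝ),
    (∀ u : EuclideanSpace ℝ (Fin n),
        Summable fun k : Fin n → ℤ => |χ (u - nodes t k)| * ‖u - nodes t k‖ ^ β) ∧
      ∃ M : ℝ, ∀ u : EuclideanSpace ℝ (Fin n),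
        (∑' k : Fin n → ℤ, |χ (u - nodes t k)| * ‖u - nodes t k‖ ^ β) ≤ M

lemma coord_le_norm {n : ℕ} (u : EuclideanSpace ℝ (Fin n)) (i : Fin n) : |u i| ≤ ‖u‖ := by
  rw [EuclideanSpace.norm_eq]
  calc |u i| = Real.sqrt (|u i|^2) := by rw [Real.sqrt_sq_eq_abs, abs_abs]
  _ ≤ _ := by
      apply Real.sqrt_le_sqrt
      have h := Finset.single_le_sum (f := fun j => ‖u j‖^2) (fun j _ => by positivity)
        (Finset.mem_univ i)
      simpa [Real.norm_eq_abs, sq_abs] using h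

lemma norm_le_of_coords {n : ℕ} {b : ℝ} (u : EuclideanSpace ℝ (Fin n)) (h : ∀ i, |u i| ≤ b)
    (hb : 0 ≤ b) : ‖u‖ ≤ Real.sqrt n * b := by
  rw [EuclideanSpace.norm_eq]
  calc Real.sqrt (∑ i, ‖u i‖^2) ≤ Real.sqrt (∑ _i : Fin n, b^2) := by
        apply Real.sqrt_le_sqrt; apply Finset.sum_le_sum; intro i _
        rw [Real.norm_eq_abs]; exact pow_le_pow_left₀ (abs_nonneg _) (h i) 2
  _ = Real.sqrt n * b := by
        rw [Finset.sum_const, Finset.card_univ, Fintype.card_fin, nsmul_eq_mul,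
          Real.sqrt_mul (by positivity), Real.sqrt_sq hb]

lemma volume_cell {n : ℕ} (t : ℤ → ℝ) (w : ℝ) (k : Fin n → ℤ) :
    volume (cell t w k) = ∏ i, ENNReal.ofReal (t (k i + 1)/w - t (k i)/w) := by
  have hp := EuclideanSpace.volume_preserving_symm_measurableEquiv_toLp (Fin n)
  have hs : MeasurableSet (Set.univ.pi fun i => Set.Icc (t (k i)/w) (t (k i+1)/w) :
      Set (Fin n → ℝ)) := MeasurableSet.univ_pi fun i => measurableSet_Icc
  have : cell t w k = (MeasurableEquiv.toLp 2 (Fin n → ℝ)).symm ⁻¹'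
      (Set.univ.pi fun i => Set.Icc (t (k i)/w) (t (k i+1)/w)) := rfl
  rw [this, hp.measure_preimage hs.nullMeasurableSet, volume_pi_pi]
  simp [Real.volume_Icc]

lemma cell_measurable {n : ℕ} (t : ℤ → ℝ) (w : ℝ) (k : Fin n → ℤ) :
    MeasurableSet (cell t w k) := by
  have hs : MeasurableSet (Set.univ.pi fun i => Set.Icc (t (k i)/w) (t (k i+1)/w) :
      Set (Fin n → ℝ)) := MeasurableSet.univ_pi fun i => measurableSet_Icc
  exact (MeasurableEquiv.toLp 2 (Fin n → ℝ)).symm.measurable hs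

lemma node_sep {t : ℤ → ℝ} {δ Δ : ℝ} (ht : IsNodeSeq t δ Δ) (a b : ℤ) :
    δ * |(a : ℝ) - b| ≤ |t a - t b| := by
  have key : ∀ (c : ℤ) (m : ℕ), δ * m ≤ t (c + m) - t c := by
    intro c m
    induction m with
    | zero => simp
    | succ m ih =>
      have h1 := ht.gap_lower (c + m)
      have h2 : (c : ℤ) + ((m : ℕ) + 1 : ℕ) = (c + m) + 1 := by push_cast; ring
      rw [h2]
      push_cast
      push_cast at ih
      linarith
  rcases le_total a b with h | h
  · obtain ⟨m, hm⟩ := Int.le.dest h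
    have hk := key a m
    rw [hm] at hk
    have hab : (a : ℝ) - b = -(m : ℝ) := by
      have := congrArg (Int.cast : ℤ → ℝ) hm; push_cast at this; linarith
    have h0 : (0:ℝ) ≤ t b - t a :=
      (mul_nonneg ht.delta_pos.le (Nat.cast_nonneg m)).trans hk
    rw [hab, abs_neg, abs_of_nonneg (Nat.cast_nonneg m), abs_sub_comm, abs_of_nonneg h0]
    exact hk
  · obtain ⟨m, hm⟩ := Int.le.dest h
    have hk := key b m
    rw [hm] at hk
    have hab : (a : ℝ) - b = (m : ℝ) := by
      have := congrArg (Int.cast : ℤ → ℝ) hm; push_cast at this; linarith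
    have h0 : (0:ℝ) ≤ t a - t b :=
      (mul_nonneg ht.delta_pos.le (Nat.cast_nonneg m)).trans hk
    rw [hab, abs_of_nonneg (Nat.cast_nonneg m), abs_of_nonneg h0]
    exact hk

lemma near_card {t : ℤ → ℝ} {δ Δ : ℝ} (ht : IsNodeSeq t δ Δ) (r : ℝ) (x : ℝ) :
    ∃ s : Finset ℤ, {a : ℤ | |x - t a| < r} ⊆ ↑s ∧ s.card ≤ 2 * ⌈2 * r / δ⌉₊ + 1 := by
  by_cases hne : {a : ℤ | |x - t a| < r}.Nonempty
  · obtain ⟨a₀, ha₀⟩ := hne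
    set m : ℤ := (⌈2 * r / δ⌉₊ : ℤ) with hm
    refine ⟨Finset.Icc (a₀ - m) (a₀ + m), ?_, ?_⟩
    · intro a ha
      simp only [Set.mem_setOf_eq] at ha ha₀
      have h1 : δ * |(a : ℝ) - a₀| ≤ |t a - t a₀| := node_sep ht a a₀
      have h2 : |t a - t a₀| < 2 * r := by
        calc |t a - t a₀| ≤ |t a - x| + |x - t a₀| := abs_sub_le _ _ _
        _ < 2 * r := by rw [abs_sub_comm (t a) x]; linarith
      have h3 : |(a : ℝ) - a₀| < 2 * r / δ := by
        rw [lt_div_iff₀ ht.delta_pos]; nlinarith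
      have h4 : |(a : ℝ) - a₀| ≤ (m : ℝ) := by
        refine h3.le.trans ?_
        rw [hm]; push_cast; exact Nat.le_ceil _
      have h5' : |((a - a₀ : ℤ) : ℝ)| ≤ ((m : ℤ) : ℝ) := by push_cast; push_cast at h4; exact h4
      have h5 : |a - a₀| ≤ m := by exact_mod_cast h5'
      rw [abs_le] at h5
      simp only [Finset.coe_Icc, Set.mem_Icc]
      omega
    · rw [Int.card_Icc]
      omega
  · exact ⟨∅, by simp [Set.not_nonempty_iff_eq_empty.mp hne], by simp⟩

lemma near_finset {n : ℕ} {t : ℤ → ℝ} {N : ℕ} {r : ℝ}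
    (hnc : ∀ x : ℝ, ∃ s : Finset ℤ, {a : ℤ | |x - t a| < r} ⊆ ↑s ∧ s.card ≤ N)
    (u : EuclideanSpace ℝ (Fin n)) :
    ∃ S : Finset (Fin n → ℤ), {k : Fin n → ℤ | ‖u - nodes t k‖ < r} ⊆ ↑S ∧ S.card ≤ N ^ n := by
  choose s hs hc using fun i : Fin n => hnc (u i)
  refine ⟨Fintype.piFinset s, ?_, ?_⟩
  · intro k hk
    simp only [Set.mem_setOf_eq] at hk
    rw [Finset.mem_coe, Fintype.mem_piFinset]
    intro i
    apply hs i
    have h1 := coord_le_norm (u - nodes t k) i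
    have he : (u - nodes t k) i = u i - t (k i) := by simp [nodes]
    rw [he] at h1
    exact Set.mem_setOf_eq ▸ lt_of_le_of_lt h1 hk
  · rw [Fintype.card_piFinset]
    calc ∏ i, (s i).card ≤ ∏ _i : Fin n, N := Finset.prod_le_prod (fun _ _ => Nat.zero_le _)
          (fun i _ => hc i)
    _ = N ^ n := by simp

lemma kernel_abs_bound {n : ℕ} {t : ℤ → ℝ} {χ : EuclideanSpace ℝ (Fin n) → ℝ}
    {ε : ℝ} (hε : 0 < ε) {Mb : ℝ}
    (hMb : ∀ x : EuclideanSpace ℝ (Fin n), ‖x‖ < ε → |χ x| ≤ Mb)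
    {β : ℝ} (hβ : 0 < β)
    (hsum : ∀ u : EuclideanSpace ℝ (Fin n),
      Summable fun k : Fin n → ℤ => |χ (u - nodes t k)| * ‖u - nodes t k‖ ^ β)
    {Mm : ℝ}
    (hMm : ∀ u : EuclideanSpace ℝ (Fin n),
      (∑' k : Fin n → ℤ, |χ (u - nodes t k)| * ‖u - nodes t k‖ ^ β) ≤ Mm)
    {N : ℕ}
    (hnf : ∀ u : EuclideanSpace ℝ (Fin n), ∃ S : Finset (Fin n → ℤ),
      {k : Fin n → ℤ | ‖u - nodes t k‖ < ε} ⊆ ↑S ∧ S.card ≤ N ^ n)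
    (u : EuclideanSpace ℝ (Fin n)) :
    Summable (fun k : Fin n → ℤ => |χ (u - nodes t k)|) ∧
      ∑' k : Fin n → ℤ, |χ (u - nodes t k)| ≤ N ^ n * Mb + Mm / ε ^ β := by
  have hMb0 : 0 ≤ Mb := (abs_nonneg _).trans (hMb 0 (by simpa using hε))
  obtain ⟨S, hS, hSc⟩ := hnf u
  set g1 : (Fin n → ℤ) → ℝ := fun k => if k ∈ S then Mb else 0 with hg1
  set g2 : (Fin n → ℤ) → ℝ :=
    fun k => (|χ (u - nodes t k)| * ‖u - nodes t k‖ ^ β) / ε ^ β with hg2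
  have hεβ : (0:ℝ) < ε ^ β := Real.rpow_pos_of_pos hε β
  have hle : ∀ k, |χ (u - nodes t k)| ≤ g1 k + g2 k := by
    intro k
    by_cases hk : ‖u - nodes t k‖ < ε
    · have h1 : g1 k = Mb := if_pos (hS hk)
      have h2 : 0 ≤ g2 k := by positivity
      have := hMb _ hk
      linarith
    · push_neg at hk
      have h1 : 0 ≤ g1 k := by rw [hg1]; dsimp only; split <;> simp [hMb0]
      have h2 : |χ (u - nodes t k)| ≤ g2 k := by
        rw [hg2]; dsimp only
        rw [le_div_iff₀ hεβ]
        have := Real.rpow_le_rpow hε.le hk hβ.le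
        nlinarith [abs_nonneg (χ (u - nodes t k))]
      linarith
  have hg1s : Summable g1 := summable_of_ne_finset_zero (s := S) (fun k hk => if_neg hk)
  have hg2s : Summable g2 := (hsum u).div_const _
  have hgs : Summable (fun k => g1 k + g2 k) := hg1s.add hg2s
  have habs : Summable (fun k : Fin n → ℤ => |χ (u - nodes t k)|) :=
    Summable.of_nonneg_of_le (fun k => abs_nonneg _) hle hgs
  refine ⟨habs, ?_⟩
  calc ∑' k, |χ (u - nodes t k)| ≤ ∑' k, (g1 k + g2 k) := Summable.tsum_le_tsum hle habs hgs
  _ = (∑' k, g1 k) + ∑' k, g2 k := Summable.tsum_add hg1s hg2s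
  _ ≤ N ^ n * Mb + Mm / ε ^ β := by
      have e1 : ∑' k, g1 k = ∑ k ∈ S, g1 k := tsum_eq_sum (fun k hk => if_neg hk)
      have e2 : ∑ k ∈ S, g1 k = S.card * Mb := by
        rw [Finset.sum_congr rfl (fun k hk => if_pos hk), Finset.sum_const, nsmul_eq_mul]
      have e3 : ∑' k, g2 k = (∑' k, |χ (u - nodes t k)| * ‖u - nodes t k‖ ^ β) / ε ^ β := by
        rw [hg2]; exact tsum_div_const
      have h4 : (∑' k, |χ (u - nodes t k)| * ‖u - nodes t k‖ ^ β) / ε ^ β ≤ Mm / ε ^ β :=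
        div_le_div_of_nonneg_right (hMm u) hεβ.le
      have h5 : (S.card : ℝ) * Mb ≤ (N ^ n : ℕ) * Mb := by
        apply mul_le_mul_of_nonneg_right _ hMb0
        exact_mod_cast hSc
      push_cast at h5
      rw [e1, e2, e3]
      linarith

set_option maxHeartbeats 2000000 in
/-- Uniform convergence of the multivariate sampling Kantorovich operators for uniformly
continuous and bounded functions: `lim_{w→+∞} ‖S_w^χ f − f‖_∞ = 0`. -/
theorem sk_uniform_convergence {n : ℕ} (t : ℤ → ℝ) (δ Δ : ℝ) (ht : IsNodeSeq t δ Δ)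
    (χ : EuclideanSpace ℝ (Fin n) → ℝ) (hχ : IsKernel t χ)
    (f : EuclideanSpace ℝ (Fin n) → ℝ) (hf_uc : UniformContinuous f)
    (hf_bdd : ∃ M : ℝ, ∀ x : EuclideanSpace ℝ (Fin n), |f x| ≤ M) :
    TendstoUniformly (fun (w : ℝ) (x : EuclideanSpace ℝ (Fin n)) => SK t χ w f x) f atTop := by
  classical
  obtain ⟨Mf, hMf⟩ := hf_bdd
  have hMf0 : 0 ≤ Mf := (abs_nonneg _).trans (hMf 0)
  obtain ⟨ε₀, hε₀, Mb, hMb⟩ := hχ.bounded_near_zero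
  obtain ⟨β, hβ, hmsum, Mm, hMm⟩ := hχ.moment
  have hMm0 : 0 ≤ Mm := le_trans (tsum_nonneg fun k => by positivity) (hMm 0)
  have hnf : ∀ u : EuclideanSpace ℝ (Fin n), ∃ S : Finset (Fin n → ℤ),
      {k : Fin n → ℤ | ‖u - nodes t k‖ < ε₀} ⊆ ↑S ∧
        S.card ≤ (2 * ⌈2 * ε₀ / δ⌉₊ + 1) ^ n :=
    fun u => near_finset (fun x => near_card ht ε₀ x) u
  set C : ℝ := ((2 * ⌈2 * ε₀ / δ⌉₊ + 1 : ℕ) : ℝ) ^ n * Mb + Mm / ε₀ ^ β with hCdef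
  have hker : ∀ u : EuclideanSpace ℝ (Fin n),
      Summable (fun k : Fin n → ℤ => |χ (u - nodes t k)|) ∧
        ∑' k : Fin n → ℤ, |χ (u - nodes t k)| ≤ C := by
    intro u
    have h := kernel_abs_bound hε₀ hMb hβ hmsum hMm hnf u
    refine ⟨h.1, h.2.trans_eq ?_⟩
    rw [hCdef]
    try push_cast
    try ring
  have hC0 : 0 ≤ C := le_trans (tsum_nonneg fun k => abs_nonneg _) (hker 0).2
  rw [Metric.tendstoUniformly_iff]
  intro ε hε
  set η : ℝ := ε / (3 * (C + 1)) with hηdef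
  have hη : 0 < η := by positivity
  obtain ⟨d, hd, hfd⟩ := Metric.uniformContinuous_iff.mp hf_uc η hη
  have hev1 : ∀ᶠ w : ℝ in atTop, (1:ℝ) ≤ w := eventually_ge_atTop 1
  have hev2 : ∀ᶠ w : ℝ in atTop, Real.sqrt n * Δ / w < d / 2 := by
    have h0 : Tendsto (fun w : ℝ => Real.sqrt n * Δ / w) atTop (nhds 0) :=
      Tendsto.const_div_atTop tendsto_id _
    exact h0.eventually (gt_mem_nhds (by positivity))
  have hev3 : ∀ᶠ w : ℝ in atTop,
      2 * Mf / (w * (d / 2)) ^ β * Mm < ε / 3 := by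
    have h1 : Tendsto (fun w : ℝ => w * (d / 2)) atTop atTop :=
      Tendsto.atTop_mul_const (by positivity) tendsto_id
    have h2 : Tendsto (fun w : ℝ => (w * (d / 2)) ^ β) atTop atTop :=
      (tendsto_rpow_atTop hβ).comp h1
    have h3 : Tendsto (fun w : ℝ => 2 * Mf / (w * (d / 2)) ^ β * Mm) atTop (nhds 0) := by
      have h4 := (Tendsto.const_div_atTop h2 (2 * Mf)).mul_const Mm
      rwa [zero_mul] at h4
    exact h3.eventually (gt_mem_nhds (by positivity))
  filter_upwards [hev1, hev2, hev3] with w hw1 hw2 hw3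
  intro x
  have hw0 : (0:ℝ) < w := lt_of_lt_of_le zero_lt_one hw1
  set A : (Fin n → ℤ) → ℝ := fun k =>
    (w ^ n / ∏ i, (t (k i + 1) - t (k i))) * ∫ u in cell t w k, f u with hAdef
  have hP : ∀ k : Fin n → ℤ, 0 < ∏ i, (t (k i + 1) - t (k i)) := fun k =>
    Finset.prod_pos fun i _ => lt_of_lt_of_le ht.delta_pos (ht.gap_lower _)
  have hvol : ∀ k : Fin n → ℤ, volume (cell t w k) =
      ENNReal.ofReal ((∏ i, (t (k i + 1) - t (k i))) / w ^ n) := by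
    intro k
    rw [volume_cell]
    rw [← ENNReal.ofReal_prod_of_nonneg (fun i _ => by
      rw [div_sub_div_same]
      have := ht.gap_lower (k i)
      have : (0:ℝ) ≤ t (k i + 1) - t (k i) := le_trans ht.delta_pos.le this
      positivity)]
    congr 1
    calc ∏ i, (t (k i + 1)/w - t (k i)/w) = ∏ i, (t (k i + 1) - t (k i))/w := by
          refine Finset.prod_congr rfl fun i _ => ?_
          rw [div_sub_div_same]
    _ = (∏ i, (t (k i + 1) - t (k i))) / w ^ n := by
          rw [Finset.prod_div_distrib, Finset.prod_const, Finset.card_univ, Fintype.card_fin]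
  have hvolT : ∀ k : Fin n → ℤ, (volume (cell t w k)).toReal =
      (∏ i, (t (k i + 1) - t (k i))) / w ^ n := by
    intro k
    rw [hvol, ENNReal.toReal_ofReal]
    have := hP k
    positivity
  have hvlt : ∀ k : Fin n → ℤ, volume (cell t w k) < ⊤ := by
    intro k; rw [hvol]; exact ENNReal.ofReal_lt_top
  have hint : ∀ k : Fin n → ℤ, IntegrableOn f (cell t w k) volume := by
    intro k
    exact Measure.integrableOn_of_bounded (hvlt k).ne
      hf_uc.continuous.aestronglyMeasurable
      (Eventually.of_forall fun y => by rw [Real.norm_eq_abs]; exact hMf y)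
  have hA : ∀ k : Fin n → ℤ, |A k| ≤ Mf := by
    intro k
    have h1 : ‖∫ y in cell t w k, f y‖ ≤ Mf * (volume (cell t w k)).toReal :=
      norm_setIntegral_le_of_norm_le_const (hvlt k)
        (fun y _ => by rw [Real.norm_eq_abs]; exact hMf y)
    rw [hvolT, Real.norm_eq_abs] at h1
    have hPk := hP k
    have hq : (0:ℝ) < w ^ n / ∏ i, (t (k i + 1) - t (k i)) := by positivity
    calc |A k| = (w ^ n / ∏ i, (t (k i + 1) - t (k i))) * |∫ y in cell t w k, f y| := by
          rw [hAdef]; dsimp only; rw [abs_mul, abs_of_pos hq]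
    _ ≤ (w ^ n / ∏ i, (t (k i + 1) - t (k i))) *
          (Mf * ((∏ i, (t (k i + 1) - t (k i))) / w ^ n)) :=
        mul_le_mul_of_nonneg_left h1 hq.le
    _ = Mf := by
        have hne1 : (∏ i, (t (k i + 1) - t (k i))) ≠ 0 := hPk.ne'
        have hne2 : w ^ n ≠ 0 := (pow_pos hw0 n).ne'
        field_simp
  have hnear : ∀ k : Fin n → ℤ, ‖w • x - nodes t k‖ ≤ w * (d / 2) → |A k - f x| ≤ η := by
    intro k hk
    have hcell : ∀ y ∈ cell t w k, |f y - f x| ≤ η := by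
      intro y hy
      have hyc : ∀ i, y i ∈ Set.Icc (t (k i)/w) (t (k i + 1)/w) := fun i =>
        (show WithLp.ofLp y ∈ Set.univ.pi (fun i => Set.Icc (t (k i) / w) (t (k i + 1) / w)) from hy) i (Set.mem_univ i)
      have hDw : (0:ℝ) ≤ Δ / w := div_nonneg ht.Delta_pos.le hw0.le
      have h1 : ‖y - w⁻¹ • nodes t k‖ ≤ Real.sqrt n * (Δ / w) := by
        apply norm_le_of_coords _ _ hDw
        intro i
        obtain ⟨hcl, hcr⟩ := hyc i
        have hgap := ht.gap_upper (k i)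
        have he : (y - w⁻¹ • nodes t k) i = y i - w⁻¹ * t (k i) := by simp [nodes]
        have he2 : w⁻¹ * t (k i) = t (k i) / w := by rw [inv_mul_eq_div]
        have haux : t (k i + 1)/w - t (k i)/w ≤ Δ / w := by
          rw [div_sub_div_same]
          gcongr
        rw [he, he2, abs_le]
        constructor
        · linarith
        · linarith
      have h2 : ‖w⁻¹ • nodes t k - x‖ ≤ d / 2 := by
        have he : w⁻¹ • nodes t k - x = (-(w⁻¹)) • (w • x - nodes t k) := by
          rw [neg_smul, smul_sub, smul_smul, inv_mul_cancel₀ hw0.ne', one_smul, neg_sub]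
        rw [he, norm_smul, Real.norm_eq_abs, abs_neg, abs_of_pos (inv_pos.mpr hw0)]
        calc w⁻¹ * ‖w • x - nodes t k‖ ≤ w⁻¹ * (w * (d/2)) :=
              mul_le_mul_of_nonneg_left hk (inv_pos.mpr hw0).le
        _ = d / 2 := by field_simp
      have hdist : dist y x < d := by
        have h3 := dist_triangle y (w⁻¹ • nodes t k) x
        rw [dist_eq_norm, dist_eq_norm, dist_eq_norm] at h3
        rw [dist_eq_norm]
        have h4 : Real.sqrt n * (Δ / w) < d / 2 := by
          rw [← mul_div_assoc]; exact hw2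
        linarith
      have := hfd hdist
      rw [Real.dist_eq] at this
      exact this.le
    have hconst : IntegrableOn (fun _ => f x) (cell t w k) volume :=
      integrableOn_const (hvlt k).ne
    have hPk := hP k
    have hq : (0:ℝ) < w ^ n / ∏ i, (t (k i + 1) - t (k i)) := by positivity
    have hsub : A k - f x =
        (w ^ n / ∏ i, (t (k i + 1) - t (k i))) * ∫ y in cell t w k, (f y - f x) := by
      rw [hAdef]; dsimp only
      rw [integral_sub (hint k) hconst, setIntegral_const, measureReal_def, hvolT, smul_eq_mul]
      field_simp
    have h5 : ‖∫ y in cell t w k, (f y - f x)‖ ≤ η * (volume (cell t w k)).toReal :=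
      norm_setIntegral_le_of_norm_le_const (hvlt k)
        (fun y hy => by rw [Real.norm_eq_abs]; exact hcell y hy)
    rw [hvolT, Real.norm_eq_abs] at h5
    calc |A k - f x| = (w ^ n / ∏ i, (t (k i + 1) - t (k i))) *
          |∫ y in cell t w k, (f y - f x)| := by rw [hsub, abs_mul, abs_of_pos hq]
    _ ≤ (w ^ n / ∏ i, (t (k i + 1) - t (k i))) *
          (η * ((∏ i, (t (k i + 1) - t (k i))) / w ^ n)) :=
        mul_le_mul_of_nonneg_left h5 hq.le
    _ = η := by
        have hne1 : (∏ i, (t (k i + 1) - t (k i))) ≠ 0 := hPk.ne'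
        have hne2 : w ^ n ≠ 0 := (pow_pos hw0 n).ne'
        field_simp
  -- the master pointwise bound
  set c2 : ℝ := 2 * Mf / (w * (d / 2)) ^ β with hc2def
  have hwd : (0:ℝ) < w * (d / 2) := by positivity
  have hwdβ : (0:ℝ) < (w * (d / 2)) ^ β := Real.rpow_pos_of_pos hwd β
  have hc2nn : 0 ≤ c2 := by positivity
  have hmaster : ∀ k : Fin n → ℤ,
      |χ (w • x - nodes t k) * (A k - f x)| ≤
        η * |χ (w • x - nodes t k)| +
          c2 * (|χ (w • x - nodes t k)| * ‖w • x - nodes t k‖ ^ β) := by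
    intro k
    rw [abs_mul]
    by_cases hk : ‖w • x - nodes t k‖ ≤ w * (d / 2)
    · have h1 := hnear k hk
      have h2 : 0 ≤ c2 * (|χ (w • x - nodes t k)| * ‖w • x - nodes t k‖ ^ β) := by positivity
      nlinarith [abs_nonneg (χ (w • x - nodes t k))]
    · push_neg at hk
      have h1 : |A k - f x| ≤ 2 * Mf := by
        have h1a := abs_add_le (A k) (-(f x))
        rw [abs_neg] at h1a
        have := hA k
        have := hMf x
        rw [sub_eq_add_neg]
        linarith
      have h2 : (w * (d / 2)) ^ β ≤ ‖w • x - nodes t k‖ ^ β :=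
        Real.rpow_le_rpow hwd.le hk.le hβ.le
      have h3 : 0 ≤ η * |χ (w • x - nodes t k)| := by positivity
      have h4 : |χ (w • x - nodes t k)| * |A k - f x| ≤
          c2 * (|χ (w • x - nodes t k)| * ‖w • x - nodes t k‖ ^ β) := by
        rw [hc2def, div_mul_eq_mul_div, le_div_iff₀ hwdβ]
        nlinarith [abs_nonneg (χ (w • x - nodes t k)),
          mul_le_mul_of_nonneg_left h2 (mul_nonneg hMf0 (abs_nonneg (χ (w • x - nodes t k)))),
          mul_le_mul_of_nonneg_left h1 (mul_nonneg (abs_nonneg (χ (w • x - nodes t k))) hwdβ.le)]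
      linarith
  -- summability facts
  have hS1 : Summable (fun k : Fin n → ℤ => |χ (w • x - nodes t k)|) := (hker (w • x)).1
  have hS2 := hmsum (w • x)
  have hSmaj : Summable (fun k : Fin n → ℤ =>
      η * |χ (w • x - nodes t k)| +
        c2 * (|χ (w • x - nodes t k)| * ‖w • x - nodes t k‖ ^ β)) :=
    (hS1.mul_left η).add (hS2.mul_left c2)
  have hSL : Summable (fun k : Fin n → ℤ => |χ (w • x - nodes t k) * (A k - f x)|) :=
    Summable.of_nonneg_of_le (fun k => abs_nonneg _) hmaster hSmaj
  have hSLS : Summable (fun k : Fin n → ℤ => χ (w • x - nodes t k) * (A k - f x)) :=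
    hSL.of_abs
  have hSχ : Summable (fun k : Fin n → ℤ => χ (w • x - nodes t k)) := hS1.of_abs
  have hSfx : Summable (fun k : Fin n → ℤ => χ (w • x - nodes t k) * f x) :=
    hSχ.mul_right _
  -- the identity SK - f x = ∑' χ * (A - f x)
  have hSK : SK t χ w f x = ∑' k : Fin n → ℤ, χ (w • x - nodes t k) * A k := by
    unfold SK
    simp only [hAdef]
  have hsplit : ∑' k : Fin n → ℤ, χ (w • x - nodes t k) * A k =
      (∑' k : Fin n → ℤ, χ (w • x - nodes t k) * (A k - f x)) +
        ∑' k : Fin n → ℤ, χ (w • x - nodes t k) * f x := by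
    rw [← Summable.tsum_add hSLS hSfx]
    exact tsum_congr fun k => by ring
  have hp1 : ∑' k : Fin n → ℤ, χ (w • x - nodes t k) * f x = f x := by
    rw [tsum_mul_right, hχ.partition_of_unity (w • x), one_mul]
  have hid : f x - SK t χ w f x =
      -(∑' k : Fin n → ℤ, χ (w • x - nodes t k) * (A k - f x)) := by
    rw [hSK, hsplit, hp1]; ring
  rw [Real.dist_eq, hid, abs_neg]
  calc |∑' k : Fin n → ℤ, χ (w • x - nodes t k) * (A k - f x)|
      ≤ ∑' k : Fin n → ℤ, |χ (w • x - nodes t k) * (A k - f x)| := by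
        have hnorm : Summable fun k : Fin n → ℤ =>
            ‖χ (w • x - nodes t k) * (A k - f x)‖ := by
          simpa only [Real.norm_eq_abs] using hSL
        simpa only [Real.norm_eq_abs] using norm_tsum_le_tsum_norm hnorm
  _ ≤ ∑' k : Fin n → ℤ, (η * |χ (w • x - nodes t k)| +
        c2 * (|χ (w • x - nodes t k)| * ‖w • x - nodes t k‖ ^ β)) :=
      Summable.tsum_le_tsum hmaster hSL hSmaj
  _ = η * (∑' k : Fin n → ℤ, |χ (w • x - nodes t k)|) +
        c2 * ∑' k : Fin n → ℤ, |χ (w • x - nodes t k)| * ‖w • x - nodes t k‖ ^ β := by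
      rw [Summable.tsum_add (hS1.mul_left η) (hS2.mul_left c2), tsum_mul_left, tsum_mul_left]
  _ ≤ η * C + c2 * Mm :=
      add_le_add (mul_le_mul_of_nonneg_left (hker (w • x)).2 hη.le)
        (mul_le_mul_of_nonneg_left (hMm (w • x)) hc2nn)
  _ < ε := by
      have h6 : η * C ≤ ε / 3 := by
        rw [hηdef, div_mul_eq_mul_div,
          div_le_div_iff₀ (by positivity) (by norm_num : (0:ℝ) < 3)]
        nlinarith [mul_nonneg hε.le hC0]
      have h7 : c2 * Mm < ε / 3 := hw3
      clear_value C η c2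
      linarith [hε, h6, h7]
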